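/- Let r, s ≥ 1 with 1/r + 1/s = 1 and let R_x, C̄ > 0. Suppose x ∈ ℝ^p satisfies ‖x‖_r ≤ R_x and B ∈ ℝ^{p×K} satisfies K^{1/s}‖B'‖_{1,s} + ‖B‖_{s,1} ≤ C̄. Then for every one-hot label vector y ∈ {e_1, ..., e_K} ⊂ ℝ^K, the multiclass logistic regression log-loss is bounded: 0 ≤ log(Σ_{k=1}^K e^{(B'x)_k}) − y'B'x ≤ R_x·C̄ + log K. -/

import Mathlib

open Real Matrix Finset

/-- The ℓ_r norm of a vector z ∈ ℝ^d: (Σ_i |z_i|^r)^(1/r). -/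
noncomputable def lnorm {d : ℕ} (r : ℝ) (z : Fin d → ℝ) : ℝ :=
  (∑ i, |z i| ^ r) ^ (1 / r)

/-- The L_{r,s} matrix norm: the ℓ_s norm of the vector of ℓ_r norms of the columns. -/
noncomputable def Lnorm {m n : ℕ} (r s : ℝ) (A : Matrix (Fin m) (Fin n) ℝ) : ℝ :=
  (∑ j, (∑ i, |A i j| ^ r) ^ (s / r)) ^ (1 / s)


/-- The log-sum-exp function on ℝ^K. -/
noncomputable def lse {K : ℕ} (u : Fin K → ℝ) : ℝ := Real.log (∑ k, Real.exp (u k))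

/-- The multiclass logistic regression log-loss: log(Σ_k e^{(B'x)_k}) − y'B'x. -/
noncomputable def logloss {p K : ℕ} (B : Matrix (Fin p) (Fin K) ℝ)
    (x : Fin p → ℝ) (y : Fin K → ℝ) : ℝ :=
  lse (Bᵀ.mulVec x) - y ⬝ᵥ Bᵀ.mulVec x

/-!
The prediction scores are `u = B'x`, and with the one-hot label `e_i` the loss is `lse u - u i`.
It is nonnegative because `lse` dominates every coordinate, and it is at most
`log K + max_k (u k - u i)` because `lse` exceeds the maximum by at most `log K`. By Hölder,
`|u k| ≤ ‖B_{·k}‖_s ‖x‖_r`, so any two scores differ by at most `R_x` times the sum of the column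
norms, which is `‖B‖_{s,1} ≤ C̄`.
-/

lemma lnorm_nonneg {d : ℕ} (r : ℝ) (z : Fin d → ℝ) : 0 ≤ lnorm r z := by
  unfold lnorm; positivity

lemma Lnorm_nonneg {m n : ℕ} (r s : ℝ) (A : Matrix (Fin m) (Fin n) ℝ) : 0 ≤ Lnorm r s A := by
  unfold Lnorm; positivity

lemma Lnorm_one_right {m n : ℕ} (s : ℝ) (A : Matrix (Fin m) (Fin n) ℝ) :
    Lnorm s 1 A = ∑ j, lnorm s (Aᵀ j) := by
  simp [Lnorm, lnorm]

lemma abs_dotProduct_le_lnorm_mul_lnorm {d : ℕ} {r s : ℝ} (hsr : s.HolderConjugate r)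
    (v z : Fin d → ℝ) : |v ⬝ᵥ z| ≤ lnorm s v * lnorm r z := by
  refine abs_le'.2 ⟨Real.inner_le_Lp_mul_Lq univ v z hsr, ?_⟩
  simpa [dotProduct, lnorm] using Real.inner_le_Lp_mul_Lq univ (-v) z hsr

lemma le_lse {K : ℕ} (u : Fin K → ℝ) (i : Fin K) : u i ≤ lse u := by
  rw [← Real.log_exp (u i)]
  exact Real.log_le_log (Real.exp_pos _)
    (single_le_sum (fun k _ ↦ (Real.exp_pos (u k)).le) (mem_univ i))

lemma lse_le_log_card_add {K : ℕ} {u : Fin K → ℝ} {M : ℝ} (hK : 0 < K) (hM : ∀ k, u k ≤ M) :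
    lse u ≤ Real.log K + M := by
  have hsum : ∑ k, Real.exp (u k) ≤ K * Real.exp M := by
    simpa using sum_le_sum fun k (_ : k ∈ univ) ↦ Real.exp_le_exp.2 (hM k)
  calc lse u ≤ Real.log (K * Real.exp M) :=
        Real.log_le_log (sum_pos (fun k _ ↦ Real.exp_pos (u k)) ⟨⟨0, hK⟩, mem_univ _⟩) hsum
    _ = Real.log K + M := by
        rw [Real.log_mul (by positivity) (Real.exp_pos M).ne', Real.log_exp]

lemma logloss_single_one {p K : ℕ} (B : Matrix (Fin p) (Fin K) ℝ) (x : Fin p → ℝ) (i : Fin K) :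
    logloss B x (Pi.single i 1) = lse (Bᵀ *ᵥ x) - (Bᵀ *ᵥ x) i := by
  rw [logloss, single_dotProduct, one_mul]

lemma sub_le_sum_of_abs_le {ι : Type*} [Fintype ι] {u c : ι → ℝ} (h : ∀ k, |u k| ≤ c k)
    (i j : ι) : u j - u i ≤ ∑ k, c k := by
  have hc : ∀ k ∈ univ, 0 ≤ c k := fun k _ ↦ (abs_nonneg _).trans (h k)
  rcases eq_or_ne j i with rfl | hji
  · simpa using sum_nonneg hc
  · calc u j - u i ≤ |u j| + |u i| := by linarith [le_abs_self (u j), neg_abs_le (u i)]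
      _ ≤ c j + c i := add_le_add (h j) (h i)
      _ ≤ ∑ k, c k := add_le_sum hc (mem_univ j) (mem_univ i) hji

theorem mlg_1s_logloss_bounded_general {p K : ℕ} (r s Rx Cbar : ℝ)
    (hr : 1 ≤ r) (hs : 1 ≤ s) (hrs : 1 / r + 1 / s = 1)
    (x : Fin p → ℝ) (hx : lnorm r x ≤ Rx)
    (B : Matrix (Fin p) (Fin K) ℝ)
    (hB : (K : ℝ) ^ (1 / s) * Lnorm 1 s Bᵀ + Lnorm s 1 B ≤ Cbar)
    (i : Fin K) :
    0 ≤ logloss B x (Pi.single i 1) ∧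
    logloss B x (Pi.single i 1) ≤ Rx * Cbar + Real.log K := by
  have hsr : s.HolderConjugate r := by
    simpa using
      Real.holderConjugate_one_div (by positivity) (by positivity) ((add_comm _ _).trans hrs)
  have hRx : 0 ≤ Rx := (lnorm_nonneg r x).trans hx
  have hcols : ∑ k, lnorm s (Bᵀ k) ≤ Cbar := by
    rw [← Lnorm_one_right]
    linarith [mul_nonneg (Real.rpow_nonneg (Nat.cast_nonneg K) (1 / s)) (Lnorm_nonneg 1 s Bᵀ)]
  set u := Bᵀ *ᵥ x
  have hu : ∀ k, |u k| ≤ Rx * lnorm s (Bᵀ k) := fun k ↦ by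
    rw [mul_comm]
    exact (abs_dotProduct_le_lnorm_mul_lnorm hsr _ x).trans
      (mul_le_mul_of_nonneg_left hx (lnorm_nonneg s _))
  have hspread : ∀ k, u k ≤ u i + Rx * Cbar := fun k ↦ by
    have := (sub_le_sum_of_abs_le hu i k).trans_eq (mul_sum _ _ _).symm
    linarith [mul_le_mul_of_nonneg_left hcols hRx]
  rw [logloss_single_one]
  exact ⟨sub_nonneg.2 (le_lse u i), by linarith [lse_le_log_card_add i.pos hspread]⟩

/-- Under ‖x‖_r ≤ R_x and K^{1/s}‖B'‖_{1,s} + ‖B‖_{s,1} ≤ C̄ (with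
1/r + 1/s = 1), the log-loss with any one-hot label y = e_i satisfies
0 ≤ h_B(x, y) ≤ R_x·C̄ + log K. -/
theorem mlg_1s_logloss_bounded {p K : ℕ} (r s Rx Cbar : ℝ)
    (hr : 1 ≤ r) (hs : 1 ≤ s) (hrs : 1 / r + 1 / s = 1)
    (hRx : 0 < Rx) (hCbar : 0 < Cbar)
    (x : Fin p → ℝ) (hx : lnorm r x ≤ Rx)
    (B : Matrix (Fin p) (Fin K) ℝ)
    (hB : (K : ℝ) ^ (1 / s) * Lnorm 1 s Bᵀ + Lnorm s 1 B ≤ Cbar)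
    (i : Fin K) :
    0 ≤ logloss B x (Pi.single i 1) ∧
    logloss B x (Pi.single i 1) ≤ Rx * Cbar + Real.log K :=
  mlg_1s_logloss_bounded_general r s Rx Cbar hr hs hrs x hx B hB i
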